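/- arXiv:1708.08377 — 3 statements merged into one kernel-verified Lean document; each statement's English description precedes it below -/
import Mathlib

section
/- Let φ be a positive 3CNF formula with clauses C_1, …, C_m over variables z_1, …, z_k, and for b ∈ ℕ₊ define (φ, z_i)_b = ∑_{j=1}^m b^{j-1}·[z_i ∈ C_j]. For a truth assignment σ ∈ {0,1}^k, define σ·φ̂ = ∑_{i=1}^k σ_i · (φ, z_i)_4. If every clause of φ contains exactly 3 distinct variables, then σ is a 1-in-3-satisfying assignment for φ (every clause has exactly one true variable) if and only if σ·φ̂ = ∑_{j=1}^m 4^{j-1}. -/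
lemma digits4 (m : ℕ) (a : ℕ → ℕ) (ha : ∀ j, a j ≤ 3) :
    (∑ j ∈ Finset.range m, 4 ^ j * a j = ∑ j ∈ Finset.range m, 4 ^ j) ↔
      ∀ j < m, a j = 1 := by
  induction m generalizing a with
  | zero => simp
  | succ n ih =>
    rw [Finset.sum_range_succ', Finset.sum_range_succ']
    have eA : ∑ j ∈ Finset.range n, 4 ^ (j + 1) * a (j + 1) =
        4 * ∑ j ∈ Finset.range n, 4 ^ j * a (j + 1) := by
      rw [Finset.mul_sum]; exact Finset.sum_congr rfl (fun j _ => by ring)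
    have eB : ∑ j ∈ Finset.range n, (4:ℕ) ^ (j + 1) =
        4 * ∑ j ∈ Finset.range n, 4 ^ j := by
      rw [Finset.mul_sum]; exact Finset.sum_congr rfl (fun j _ => by ring)
    rw [eA, eB]
    simp only [pow_zero, one_mul, mul_one]
    have key : (∑ j ∈ Finset.range n, 4 ^ j * a (j + 1) =
        ∑ j ∈ Finset.range n, 4 ^ j) ↔ ∀ j < n, a (j + 1) = 1 :=
      ih (fun j => a (j + 1)) (fun j => ha _)
    constructor
    · intro h
      have ha0 := ha 0
      have hS : (∑ j ∈ Finset.range n, 4 ^ j * a (j + 1)) =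
          ∑ j ∈ Finset.range n, 4 ^ j := by omega
      have ha0' : a 0 = 1 := by omega
      intro j hj
      cases j with
      | zero => exact ha0'
      | succ i => exact key.mp hS i (by omega)
    · intro h
      have hS : (∑ j ∈ Finset.range n, 4 ^ j * a (j + 1)) =
          ∑ j ∈ Finset.range n, 4 ^ j := key.mpr (fun j hj => h (j + 1) (by omega))
      have := h 0 (by omega)
      omega

/-- A truth assignment σ is 1-in-3-satisfying for a positive 3CNF φ
    (each clause exactly 3 distinct variables) iff σ·φ̂ = ∑_{j=1}^m 4^{j-1}. -/
theorem stmt_4 (k m : ℕ) (C : Fin m → Finset (Fin k))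
    (hC : ∀ j, (C j).card = 3) (σ : Fin k → Bool) :
    (∀ j, ((C j).filter (fun i => σ i = true)).card = 1) ↔
      (∑ i : Fin k, (if σ i then 1 else 0) *
          ∑ j : Fin m, 4 ^ (j : ℕ) * (if i ∈ C j then 1 else 0)) =
        ∑ j : Fin m, 4 ^ (j : ℕ) := by
  set a : ℕ → ℕ := fun j =>
    if h : j < m then ((C ⟨j, h⟩).filter (fun i => σ i = true)).card else 1 with ha_def
  have ha : ∀ j, a j ≤ 3 := by
    intro j
    simp only [ha_def]
    split
    · calc _ ≤ (C ⟨j, _⟩).card := Finset.card_filter_le _ _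
        _ = 3 := hC _
    · omega
  have key : (∑ i : Fin k, (if σ i then 1 else 0) *
          ∑ j : Fin m, 4 ^ (j : ℕ) * (if i ∈ C j then 1 else 0)) =
      ∑ j : Fin m, 4 ^ (j : ℕ) * a (j : ℕ) := by
    simp only [Finset.mul_sum]
    rw [Finset.sum_comm]
    congr 1
    ext j
    have harr : ∀ i : Fin k, (if σ i = true then 1 else 0) *
        (4 ^ (j : ℕ) * if i ∈ C j then 1 else 0) =
        4 ^ (j : ℕ) * ((if σ i = true then 1 else 0) * (if i ∈ C j then 1 else 0)) :=
      fun i => by ring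
    simp only [harr, ← Finset.mul_sum]
    congr 1
    simp only [ha_def, j.isLt, dif_pos, Fin.eta]
    rw [Finset.card_filter]
    have h2 : ∀ i : Fin k, (if σ i = true then 1 else 0) * (if i ∈ C j then 1 else 0) =
        if i ∈ C j then (if σ i = true then (1:ℕ) else 0) else 0 := by
      intro i; by_cases h1 : σ i = true <;> by_cases h2 : i ∈ C j <;> simp [h1, h2]
    simp only [h2, Finset.sum_ite_mem, Finset.univ_inter]
  rw [key]
  have e1 : (∑ j : Fin m, 4 ^ (j : ℕ) * a (j : ℕ)) =
      ∑ j ∈ Finset.range m, 4 ^ j * a j :=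
    Fin.sum_univ_eq_sum_range (fun j => 4 ^ j * a j) m
  have e2 : (∑ j : Fin m, 4 ^ (j : ℕ)) = ∑ j ∈ Finset.range m, 4 ^ j :=
    Fin.sum_univ_eq_sum_range (fun j => 4 ^ j) m
  rw [e1, e2, digits4 m a ha]
  constructor
  · intro h j hj
    simp only [ha_def, dif_pos hj]
    exact h _
  · intro h j
    have := h j j.isLt
    simpa only [ha_def, dif_pos j.isLt, Fin.eta] using this
end

section
/- Let a : Fin k → ℕ be super-increasing with a_1 ≥ 1. Then the map g : [0, 2^k − 1] → ℕ, g(n) = ∑_{i=1}^{k} a_i·(⌊n/2^{i-1}⌋ mod 2), is strictly monotone increasing, and in particular injective. -/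
lemma bit_eq_ite (m i : ℕ) : m / 2 ^ i % 2 = if m.testBit i then 1 else 0 := by
  rcases Nat.mod_two_eq_zero_or_one (m / 2 ^ i) with h | h <;>
    simp [Nat.testBit_eq_decide_div_mod_eq, h]

/-- For a super-increasing sequence with a first term at least 1, the map
    g(n) = ∑_{i<k} a_i·bit_i(n) is strictly monotone on [0, 2^k - 1], and in
    particular injective there. -/
theorem stmt_12 (k : ℕ) (a : ℕ → ℕ)
    (hsup : ∀ j < k, (∑ i ∈ Finset.range j, a i) < a j)
    (h1 : 1 ≤ k → 1 ≤ a 0) :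
    (∀ n n', n < n' → n' < 2 ^ k →
      (∑ i ∈ Finset.range k, a i * (n / 2 ^ i % 2)) <
        ∑ i ∈ Finset.range k, a i * (n' / 2 ^ i % 2)) ∧
    (∀ n n', n < 2 ^ k → n' < 2 ^ k →
      (∑ i ∈ Finset.range k, a i * (n / 2 ^ i % 2)) =
        (∑ i ∈ Finset.range k, a i * (n' / 2 ^ i % 2)) → n = n') := by
  have main : ∀ n n', n < n' → n' < 2 ^ k →
      (∑ i ∈ Finset.range k, a i * (n / 2 ^ i % 2)) <
        ∑ i ∈ Finset.range k, a i * (n' / 2 ^ i % 2) := by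
    intro n n' hlt hlt'
    have hn : n < 2 ^ k := hlt.trans hlt'
    have hne : n ≠ n' := hlt.ne
    have hdiff : ∃ i, i < k ∧ n.testBit i ≠ n'.testBit i := by
      by_contra h
      push_neg at h
      apply hne
      apply Nat.eq_of_testBit_eq
      intro i
      by_cases hi : i < k
      · exact h i hi
      · have hki : 2 ^ k ≤ 2 ^ i := Nat.pow_le_pow_right (by norm_num) (le_of_not_gt hi)
        rw [Nat.testBit_eq_false_of_lt (lt_of_lt_of_le hn hki),
          Nat.testBit_eq_false_of_lt (lt_of_lt_of_le hlt' hki)]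
    obtain ⟨i0, hi0k, hi0⟩ := hdiff
    set j := Nat.findGreatest (fun i => n.testBit i ≠ n'.testBit i) k with hj
    have hjP : n.testBit j ≠ n'.testBit j :=
      Nat.findGreatest_spec (P := fun i => n.testBit i ≠ n'.testBit i) (Nat.le_of_lt hi0k) hi0
    have hjk : j ≤ k := Nat.findGreatest_le k
    have hjlt : j < k := by
      rcases lt_or_eq_of_le hjk with h | h
      · exact h
      · exfalso; apply hjP
        rw [h, Nat.testBit_eq_false_of_lt hn, Nat.testBit_eq_false_of_lt hlt']
    have hhigh : ∀ i, j < i → n.testBit i = n'.testBit i := by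
      intro i hji
      by_cases hik : i ≤ k
      · by_contra hne'
        exact absurd (Nat.le_findGreatest hik hne') (not_le.mpr hji)
      · have hki : 2 ^ k ≤ 2 ^ i := Nat.pow_le_pow_right (by norm_num) (le_of_not_ge hik)
        rw [Nat.testBit_eq_false_of_lt (lt_of_lt_of_le hn hki),
          Nat.testBit_eq_false_of_lt (lt_of_lt_of_le hlt' hki)]
    have hbitj : n.testBit j = false ∧ n'.testBit j = true := by
      cases hb' : n'.testBit j with
      | false =>
        have hb : n.testBit j = true := by
          cases hb : n.testBit j
          · exact absurd (hb.trans hb'.symm) hjP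
          · rfl
        have : n' < n := Nat.lt_of_testBit j hb' hb (fun i hi => (hhigh i hi).symm)
        omega
      | true =>
        refine ⟨?_, rfl⟩
        cases hb : n.testBit j
        · rfl
        · exact absurd (hb.trans hb'.symm) hjP
    -- split sums
    have hsplit : ∀ m : ℕ, (∑ i ∈ Finset.range k, a i * (m / 2 ^ i % 2)) =
        (∑ i ∈ Finset.range j, a i * (m / 2 ^ i % 2)) + a j * (m / 2 ^ j % 2)
          + ∑ i ∈ Finset.Ico (j + 1) k, a i * (m / 2 ^ i % 2) := by
      intro m
      rw [Finset.range_eq_Ico, ← Finset.sum_Ico_consecutive _ (Nat.zero_le (j + 1)) hjlt,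
        ← Finset.range_eq_Ico, Finset.sum_range_succ]
    rw [hsplit n, hsplit n']
    have hhigh_eq : (∑ i ∈ Finset.Ico (j + 1) k, a i * (n / 2 ^ i % 2)) =
        ∑ i ∈ Finset.Ico (j + 1) k, a i * (n' / 2 ^ i % 2) := by
      apply Finset.sum_congr rfl
      intro i hi
      rw [Finset.mem_Ico] at hi
      rw [bit_eq_ite, bit_eq_ite, hhigh i hi.1]
    have hbn : n / 2 ^ j % 2 = 0 := by rw [bit_eq_ite, hbitj.1]; simp
    have hbn' : n' / 2 ^ j % 2 = 1 := by rw [bit_eq_ite, hbitj.2]; simp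
    rw [hbn, hbn', hhigh_eq]
    have hlow : (∑ i ∈ Finset.range j, a i * (n / 2 ^ i % 2)) < a j := by
      calc (∑ i ∈ Finset.range j, a i * (n / 2 ^ i % 2)) ≤ ∑ i ∈ Finset.range j, a i := by
            apply Finset.sum_le_sum
            intro i _
            have : n / 2 ^ i % 2 ≤ 1 := Nat.lt_succ_iff.mp (Nat.mod_lt _ (by norm_num))
            nlinarith
        _ < a j := hsup j hjlt
    omega
  refine ⟨main, fun n n' hn hn' heq => ?_⟩
  rcases lt_trichotomy n n' with h | h | h
  · exact absurd heq (main n n' h hn').ne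
  · exact h
  · exact absurd heq.symm (main n' n h hn).ne
end

section
/- A positive 3CNF formula φ with clauses each containing exactly 3 distinct variables is 1-in-3-satisfiable if and only if the target t = ∑_{j=1}^m 4^{j-1} belongs to the set { ∑_{i∈S} (φ, z_i)_4 : S ⊆ [1,k] } of subset sums of the variable encodings. -/
/-- Uniqueness of base-4 digits bounded by 3. -/
lemma base4_unique : ∀ (m : ℕ) (f g : ℕ → ℕ),
    (∀ j, j < m → f j ≤ 3) → (∀ j, j < m → g j ≤ 3) →
    (∑ j ∈ Finset.range m, 4 ^ j * f j) = (∑ j ∈ Finset.range m, 4 ^ j * g j) →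
    ∀ j, j < m → f j = g j := by
  intro m
  induction m with
  | zero => intro f g _ _ _ j hj; omega
  | succ n ih =>
    intro f g hf hg heq j hj
    rw [Finset.sum_range_succ' (fun j => 4 ^ j * f j),
        Finset.sum_range_succ' (fun j => 4 ^ j * g j)] at heq
    have hA : (∑ i ∈ Finset.range n, 4 ^ (i + 1) * f (i + 1)) =
        4 * ∑ i ∈ Finset.range n, 4 ^ i * f (i + 1) := by
      rw [Finset.mul_sum]; apply Finset.sum_congr rfl; intro i _; ring
    have hB : (∑ i ∈ Finset.range n, 4 ^ (i + 1) * g (i + 1)) =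
        4 * ∑ i ∈ Finset.range n, 4 ^ i * g (i + 1) := by
      rw [Finset.mul_sum]; apply Finset.sum_congr rfl; intro i _; ring
    rw [hA, hB] at heq
    simp only [pow_zero, one_mul] at heq
    have hf0 : f 0 ≤ 3 := hf 0 (by omega)
    have hg0 : g 0 ≤ 3 := hg 0 (by omega)
    have h0 : f 0 = g 0 := by omega
    have hrest : (∑ i ∈ Finset.range n, 4 ^ i * f (i + 1)) =
        ∑ i ∈ Finset.range n, 4 ^ i * g (i + 1) := by omega
    rcases Nat.eq_zero_or_pos j with rfl | hjpos
    · exact h0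
    · obtain ⟨j', rfl⟩ : ∃ j', j = j' + 1 := ⟨j - 1, by omega⟩
      exact ih (fun i => f (i + 1)) (fun i => g (i + 1))
        (fun i hi => hf (i + 1) (by omega)) (fun i hi => hg (i + 1) (by omega))
        hrest j' (by omega)

lemma sum_swap_card (k m : ℕ) (C : Fin m → Finset (Fin k)) (S : Finset (Fin k)) :
    (∑ i ∈ S, ∑ j : Fin m, 4 ^ (j : ℕ) * (if i ∈ C j then 1 else 0)) =
      ∑ j : Fin m, 4 ^ (j : ℕ) * ((C j).filter (fun i => i ∈ S)).card := by
  rw [Finset.sum_comm]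
  apply Finset.sum_congr rfl
  intro j _
  rw [← Finset.mul_sum]
  congr 1
  rw [← Finset.card_filter]
  congr 1
  ext i
  simp [Finset.mem_filter, and_comm]

/-- A positive 3CNF φ (each clause exactly 3 distinct variables) is
    1-in-3-satisfiable iff the target ∑_{j=1}^m 4^{j-1} is a subset sum of the
    variable encodings (φ, z_i)₄. -/
theorem stmt_16 (k m : ℕ) (C : Fin m → Finset (Fin k))
    (hC : ∀ j, (C j).card = 3) :
    (∃ σ : Fin k → Bool, ∀ j, ((C j).filter (fun i => σ i = true)).card = 1) ↔
      ∃ S : Finset (Fin k),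
        (∑ i ∈ S, ∑ j : Fin m, 4 ^ (j : ℕ) * (if i ∈ C j then 1 else 0)) =
          ∑ j : Fin m, 4 ^ (j : ℕ) := by
  constructor
  · rintro ⟨σ, hσ⟩
    refine ⟨Finset.univ.filter (fun i => σ i = true), ?_⟩
    rw [sum_swap_card]
    apply Finset.sum_congr rfl
    intro j _
    have : ((C j).filter (fun i => i ∈ Finset.univ.filter (fun i => σ i = true))).card
        = ((C j).filter (fun i => σ i = true)).card := by
      congr 1; ext i; simp
    rw [this, hσ j, mul_one]
  · rintro ⟨S, hS⟩
    refine ⟨fun i => decide (i ∈ S), ?_⟩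
    rw [sum_swap_card] at hS
    set c : ℕ → ℕ := fun j => if h : j < m then ((C ⟨j, h⟩).filter (fun i => i ∈ S)).card else 0
      with hc
    have hL : (∑ j : Fin m, 4 ^ (j : ℕ) * ((C j).filter (fun i => i ∈ S)).card) =
        ∑ j ∈ Finset.range m, 4 ^ j * c j := by
      rw [← Fin.sum_univ_eq_sum_range (fun j => 4 ^ j * c j) m]
      apply Finset.sum_congr rfl
      intro j _
      simp [hc, j.isLt]
    have hR : (∑ j : Fin m, 4 ^ (j : ℕ)) = ∑ j ∈ Finset.range m, 4 ^ j * 1 := by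
      rw [← Fin.sum_univ_eq_sum_range (fun j => 4 ^ j * 1) m]
      simp
    rw [hL, hR] at hS
    have key : ∀ j, j < m → c j = 1 := by
      apply base4_unique m c (fun _ => 1)
      · intro j hj
        simp only [hc, dif_pos hj]
        calc ((C ⟨j, hj⟩).filter (fun i => i ∈ S)).card ≤ (C ⟨j, hj⟩).card :=
              Finset.card_filter_le _ _
          _ = 3 := hC _
      · intro j hj; omega
      · exact hS
    intro j
    have := key j j.isLt
    simp only [hc, dif_pos j.isLt] at this
    have hfil : ((C j).filter (fun i => decide (i ∈ S) = true)).card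
        = ((C j).filter (fun i => i ∈ S)).card := by
      congr 1; ext i; simp
    rw [hfil]
    convert this using 3
end
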